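/- Let G be a group, A a group acting on G via automorphisms, and k ≥ 2. Then γ_{k-1}([G,A]) ≤ γ_k(G,A), i.e., the (k−1)-st term of the lower central series of H = [G,A] is contained in γ_k(G,A). -/

import Mathlib

open SemidirectProduct
open scoped commutatorElement

/-- Left-normed commutator `[x, l₁, l₂, …]`. -/
def lnc {S : Type*} [Group S] (x : S) (l : List S) : S :=
  l.foldl (fun c y => ⁅c, y⁆) x

/-- `γ_k(G,A)`: the subgroup of the semidirect product `G ⋊[φ] A` generated by all
left-normed commutators `[x₁,…,xₙ]` with `n ≥ k`, `x₁ ∈ G`, each `xᵢ ∈ G ∪ A`,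
and at least `k-1` of the `xᵢ` in `A`. -/
def gammaGA {G A : Type*} [Group G] [Group A] (φ : A →* MulAut G) (k : ℕ) :
    Subgroup (G ⋊[φ] A) :=
  Subgroup.closure {x | ∃ (g : G) (l : List (G ⋊[φ] A)),
      k ≤ l.length + 1 ∧
      (∀ y ∈ l, (∃ h : G, y = inl h) ∨ (∃ a : A, y = inr a)) ∧
      (∃ s : Finset (Fin l.length), k - 1 ≤ s.card ∧
        ∀ i ∈ s, ∃ a : A, l.get i = inr a) ∧
      x = lnc (inl g) l}

/-! The generators of `γ_k(G,A)` stay generators of `γ_k(G,A)` under commutation with elements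
of `G` or `A`, and become generators of `γ_{k+1}(G,A)` under commutation with elements of `A`.
Hence `γ_k(G,A)` is normal in `G ⋊ A` and `[γ_k(G,A), A] ≤ γ_{k+1}(G,A)`. The three subgroups
lemma modulo the normal subgroup `γ_{k+1}(G,A)` then gives `[γ_k(G,A), [G,A]] ≤ γ_{k+1}(G,A)`,
since `[[A, γ_k], G] ≤ [γ_{k+1}, G]` and `[[γ_k, G], A] ≤ [γ_k, A]`. Induction on `k`, starting
from `[G,A] ≤ [γ_1(G,A), A] ≤ γ_2(G,A)`, finishes the proof. -/

namespace Subgroup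

variable {P : Type*} [Group P] {N : Subgroup P} [N.Normal]

theorem commutator_closure_closure_le {S T : Set P} (h : ∀ s ∈ S, ∀ t ∈ T, ⁅s, t⁆ ∈ N) :
    ⁅closure S, closure T⁆ ≤ N := by
  rw [← QuotientGroup.ker_mk' N, ← map_eq_bot_iff, map_commutator, MonoidHom.map_closure,
    MonoidHom.map_closure, commutator_eq_bot_iff_le_centralizer, closure_le, centralizer_closure]
  rintro _ ⟨s, hs, rfl⟩ _ ⟨t, ht, rfl⟩
  rw [← commutatorElement_eq_one_iff_mul_comm, ← map_commutatorElement, ← commutatorElement_inv,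
    map_inv, inv_eq_one]
  exact (QuotientGroup.eq_one_iff _).mpr (h s hs t ht)

theorem commutator_commutator_le_of_rotate {H₁ H₂ H₃ : Subgroup P}
    (h1 : ⁅⁅H₂, H₃⁆, H₁⁆ ≤ N) (h2 : ⁅⁅H₃, H₁⁆, H₂⁆ ≤ N) : ⁅⁅H₁, H₂⁆, H₃⁆ ≤ N := by
  rw [← QuotientGroup.ker_mk' N, ← map_eq_bot_iff, map_commutator, map_commutator] at h1 h2 ⊢
  exact commutator_commutator_eq_bot_of_rotate h1 h2

end Subgroup

namespace List

variable {α : Type*} {p : α → Prop} {l : List α} {n : ℕ}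

theorem exists_finset_get_append
    (h : ∃ s : Finset (Fin l.length), n ≤ s.card ∧ ∀ i ∈ s, p (l.get i)) (l' : List α) :
    ∃ s : Finset (Fin (l ++ l').length), n ≤ s.card ∧ ∀ i ∈ s, p ((l ++ l').get i) := by
  obtain ⟨s, hcard, hs⟩ := h
  refine ⟨s.map (Fin.castLEEmb (by simp)), by simpa using hcard, ?_⟩
  simp only [Finset.mem_map, forall_exists_index, and_imp, forall_apply_eq_imp_iff₂]
  intro i hi
  simpa [List.getElem_append_left i.isLt] using hs i hi

theorem exists_finset_get_concat
    (h : ∃ s : Finset (Fin l.length), n ≤ s.card ∧ ∀ i ∈ s, p (l.get i)) {y : α} (hy : p y) :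
    ∃ s : Finset (Fin (l ++ [y]).length), n + 1 ≤ s.card ∧ ∀ i ∈ s, p ((l ++ [y]).get i) := by
  obtain ⟨s, hcard, hs⟩ := h
  let last : Fin (l ++ [y]).length := ⟨l.length, by simp⟩
  have hlast : last ∉ s.map (Fin.castLEEmb (by simp)) := by
    simp [last, Fin.ext_iff, Nat.ne_of_lt]
  refine ⟨insert last (s.map (Fin.castLEEmb (by simp))), ?_, ?_⟩
  · simpa [Finset.card_insert_of_notMem hlast] using hcard
  simp only [Finset.forall_mem_insert, Finset.mem_map, forall_exists_index, and_imp,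
    forall_apply_eq_imp_iff₂]
  refine ⟨by simpa [last] using hy, fun i hi => ?_⟩
  simpa [List.getElem_append_left i.isLt] using hs i hi

end List

theorem lnc_concat {S : Type*} [Group S] (x y : S) (l : List S) :
    lnc x (l ++ [y]) = ⁅lnc x l, y⁆ := by
  simp [lnc, List.foldl_append]

namespace SemidirectProduct

variable {G A : Type*} [Group G] [Group A] (φ : A →* MulAut G)

-- `gammaGA φ k` is definitionally `Subgroup.closure (gammaGenerators φ k)`.
def gammaGenerators (k : ℕ) : Set (G ⋊[φ] A) :=
  {x | ∃ (g : G) (l : List (G ⋊[φ] A)),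
      k ≤ l.length + 1 ∧
      (∀ y ∈ l, (∃ h : G, y = inl h) ∨ (∃ a : A, y = inr a)) ∧
      (∃ s : Finset (Fin l.length), k - 1 ≤ s.card ∧
        ∀ i ∈ s, ∃ a : A, l.get i = inr a) ∧
      x = lnc (inl g) l}

variable {φ}

theorem inl_mem_gammaGenerators_one (g : G) : inl g ∈ gammaGenerators φ 1 :=
  ⟨g, [], le_rfl, by simp, ⟨∅, le_rfl, by simp⟩, rfl⟩

theorem commutatorElement_mem_gammaGenerators {k : ℕ} {x y : G ⋊[φ] A}
    (hx : x ∈ gammaGenerators φ k) (hy : (∃ h : G, y = inl h) ∨ (∃ a : A, y = inr a)) :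
    ⁅x, y⁆ ∈ gammaGenerators φ k := by
  obtain ⟨g, l, hlen, hl, hs, rfl⟩ := hx
  refine ⟨g, l ++ [y], by simp; omega, ?_,
    List.exists_finset_get_append (p := (∃ a, · = inr a)) hs [y], (lnc_concat ..).symm⟩
  simpa [or_imp, forall_and] using ⟨hl, hy⟩

theorem commutatorElement_inr_mem_gammaGenerators_succ {k : ℕ} {x : G ⋊[φ] A}
    (hx : x ∈ gammaGenerators φ k) (a : A) : ⁅x, inr a⁆ ∈ gammaGenerators φ (k + 1) := by
  obtain ⟨g, l, hlen, hl, hs, rfl⟩ := hx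
  refine ⟨g, l ++ [inr a], by simp; omega, ?_, ?_, (lnc_concat ..).symm⟩
  · simpa [or_imp, forall_and] using hl
  · obtain ⟨s, hcard, hs⟩ := List.exists_finset_get_concat (p := (∃ b, · = inr b)) hs ⟨a, rfl⟩
    exact ⟨s, by omega, hs⟩

theorem le_normalizer_gammaGA {k : ℕ} {K : Subgroup (G ⋊[φ] A)}
    (hK : ∀ y ∈ K, (∃ h : G, y = inl h) ∨ (∃ a : A, y = inr a)) :
    K ≤ Subgroup.normalizer (gammaGA φ k : Set (G ⋊[φ] A)) := by
  refine Subgroup.le_normalizer_closure_iff.mpr fun y hy x hx => ?_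
  rw [← MulAut.conj_apply, conj_eq_commutatorElement_mul, ← commutatorElement_inv]
  exact mul_mem (inv_mem (Subgroup.subset_closure
    (commutatorElement_mem_gammaGenerators hx (hK y hy)))) (Subgroup.subset_closure hx)

instance gammaGA_normal (k : ℕ) : (gammaGA φ k).Normal := by
  rw [← Subgroup.normalizer_eq_top_iff, eq_top_iff]
  rintro z -
  rw [← inl_left_mul_inr_right z]
  refine mul_mem (le_normalizer_gammaGA (K := (inl : G →* G ⋊[φ] A).range) ?_ ⟨z.left, rfl⟩)
    (le_normalizer_gammaGA (K := (inr : A →* G ⋊[φ] A).range) ?_ ⟨z.right, rfl⟩)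
  · rintro _ ⟨h, rfl⟩; exact .inl ⟨h, rfl⟩
  · rintro _ ⟨a, rfl⟩; exact .inr ⟨a, rfl⟩

theorem commutator_gammaGA_range_inr_le (k : ℕ) :
    ⁅gammaGA φ k, (⊤ : Subgroup A).map (inr : A →* G ⋊[φ] A)⁆ ≤ gammaGA φ (k + 1) := by
  rw [← Subgroup.closure_eq (Subgroup.map _ _)]
  refine Subgroup.commutator_closure_closure_le fun x hx y hy => ?_
  obtain ⟨a, -, rfl⟩ := hy
  exact Subgroup.subset_closure (commutatorElement_inr_mem_gammaGenerators_succ hx a)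

theorem commutator_gammaGA_commutator_le (k : ℕ) :
    ⁅gammaGA φ k, ⁅(⊤ : Subgroup G).map (inl : G →* G ⋊[φ] A),
      (⊤ : Subgroup A).map (inr : A →* G ⋊[φ] A)⁆⁆ ≤ gammaGA φ (k + 1) := by
  rw [Subgroup.commutator_comm]
  apply Subgroup.commutator_commutator_le_of_rotate
  · rw [Subgroup.commutator_comm _ (gammaGA φ k)]
    exact (Subgroup.commutator_mono (commutator_gammaGA_range_inr_le k) le_rfl).trans
      (Subgroup.commutator_le_left _ _)
  · exact (Subgroup.commutator_mono (Subgroup.commutator_le_left _ _) le_rfl).trans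
      (commutator_gammaGA_range_inr_le k)

theorem commutator_range_inl_range_inr_le_gammaGA_two :
    ⁅(⊤ : Subgroup G).map (inl : G →* G ⋊[φ] A), (⊤ : Subgroup A).map (inr : A →* G ⋊[φ] A)⁆ ≤
      gammaGA φ 2 := by
  refine (Subgroup.commutator_mono ?_ le_rfl).trans (commutator_gammaGA_range_inr_le 1)
  rintro _ ⟨g, -, rfl⟩
  exact Subgroup.subset_closure (inl_mem_gammaGenerators_one g)

theorem lowerCentralSeries_commutator_le_gammaGA (m : ℕ) :
    (⁅(⊤ : Subgroup G).map (inl : G →* G ⋊[φ] A),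
      (⊤ : Subgroup A).map (inr : A →* G ⋊[φ] A)⁆).lowerCentralSeries m ≤ gammaGA φ (m + 2) := by
  induction m with
  | zero => exact commutator_range_inl_range_inr_le_gammaGA_two
  | succ m ih =>
    exact (Subgroup.commutator_mono ih le_rfl).trans (commutator_gammaGA_commutator_le _)

end SemidirectProduct

theorem stmt4 {G A : Type*} [Group G] [Group A] (φ : A →* MulAut G)
    (k : ℕ) (hk : 2 ≤ k)
    (H : Subgroup (G ⋊[φ] A))
    (hH : H = ⁅(⊤ : Subgroup G).map (inl : G →* G ⋊[φ] A),
               (⊤ : Subgroup A).map (inr : A →* G ⋊[φ] A)⁆) :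
    ∀ x ∈ lowerCentralSeries H (k - 2), (x : G ⋊[φ] A) ∈ gammaGA φ k := by
  intro x hx
  subst hH
  simpa only [Nat.sub_add_cancel hk] using lowerCentralSeries_commutator_le_gammaGA (k - 2) hx
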